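/- Define g(δ) = e^{(Z − δr)/c} + 2^{δ+1} − 2 for real δ, with r, c, Z > 0. Then g is strictly convex and its unique minimizer over ℝ is δ̄ = (c·ln(r/(c·ln 2)) + Z − c·ln 2)/(r + c·ln 2). Moreover the gap between the minimizer of g and the minimizer of f(δ) = e^{(Z−δr)/c−1} + 2^{δ+1} − 1 equals ε = c/(r + c·ln 2) = 1/(r/c + ln 2), and ε ∈ (0, 1.5). -/

import Mathlib

/-!
`g` is the sum of a decreasing exponential `e^((Z - δr)/c)` and an increasing one `2^(δ+1)`,
so it is strictly convex, and a strictly convex function has a strict global minimum at any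
critical point. The critical point is found by taking logarithms in
`(r/c) e^((Z - δr)/c) = ln 2 · 2^(δ+1)`, which is linear in `δ`. The two minimizers differ only
by `c` in the numerator, and `ε = c/(r + c ln 2) < 1/ln 2 < 3/2` because `ln 2 > 2/3`.
-/

open Real Set

theorem StrictConvexOn.comp_mul_add {f : ℝ → ℝ} (hf : StrictConvexOn ℝ univ f) {p : ℝ}
    (hp : p ≠ 0) (q : ℝ) : StrictConvexOn ℝ univ fun x ↦ f (p * x + q) := by
  refine ⟨convex_univ, fun x _ y _ hxy a b ha hb hab ↦ ?_⟩
  have hne : p * x + q ≠ p * y + q := fun h ↦ hxy (mul_left_cancel₀ hp (add_right_cancel h))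
  have key := hf.2 (mem_univ _) (mem_univ _) hne ha hb hab
  simp only [smul_eq_mul] at key ⊢
  convert key using 2
  linear_combination (-q) * hab

theorem StrictConvexOn.lt_of_hasDerivAt_eq_zero {S : Set ℝ} {f : ℝ → ℝ} {x y : ℝ}
    (hf : StrictConvexOn ℝ S f) (hx : x ∈ S) (hy : y ∈ S) (hf' : HasDerivAt f 0 x)
    (hyx : y ≠ x) : f x < f y := by
  rcases hyx.lt_or_gt with hlt | hgt
  · have := hf.slope_lt_of_hasDerivAt hy hx hlt hf'
    rw [slope_def_field, div_neg_iff] at this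
    rcases this with ⟨-, h⟩ | ⟨h, -⟩ <;> linarith
  · have := hf.lt_slope_of_hasDerivAt hx hy hgt hf'
    rw [slope_def_field, div_pos_iff] at this
    rcases this with ⟨h, -⟩ | ⟨-, h⟩ <;> linarith

noncomputable def treeSizeUpper (r c Z δ : ℝ) : ℝ :=
  exp ((Z - δ * r) / c) + (2 : ℝ) ^ (δ + 1) - 2

noncomputable def treeSizeUpperArgmin (r c Z : ℝ) : ℝ :=
  (c * log (r / (c * log 2)) + Z - c * log 2) / (r + c * log 2)

section

variable {r c : ℝ} (Z : ℝ)

theorem strictConvexOn_treeSizeUpper (hr : r ≠ 0) (hc : c ≠ 0) :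
    StrictConvexOn ℝ univ (treeSizeUpper r c Z) := by
  have hexp : StrictConvexOn ℝ univ fun δ : ℝ ↦ exp ((Z - δ * r) / c) := by
    convert strictConvexOn_exp.comp_mul_add (neg_ne_zero.2 (div_ne_zero hr hc)) (Z / c)
      using 3 with δ
    field_simp
    ring
  have hpow : ConvexOn ℝ univ fun δ : ℝ ↦ (2 : ℝ) ^ (δ + 1) := by
    simpa [Function.comp_def] using (convexOn_rpow_left two_pos).translate_left 1
  exact (hexp.add_convexOn hpow).add_const (-2) |>.congr fun δ _ ↦ by
    simp [treeSizeUpper, sub_eq_add_neg]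

theorem hasDerivAt_treeSizeUpper (δ : ℝ) :
    HasDerivAt (treeSizeUpper r c Z)
      (-(r / c) * exp ((Z - δ * r) / c) + log 2 * (2 : ℝ) ^ (δ + 1)) δ := by
  have hexp := ((((hasDerivAt_id δ).mul_const r).const_sub Z).div_const c).exp
  have hpow := ((hasDerivAt_id δ).add_const 1).const_rpow two_pos
  exact ((hexp.add hpow).sub_const 2).congr_deriv (by simp only [id]; ring)

theorem hasDerivAt_treeSizeUpper_argmin (hr : 0 < r) (hc : 0 < c) :
    HasDerivAt (treeSizeUpper r c Z) 0 (treeSizeUpperArgmin r c Z) := by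
  set δ := treeSizeUpperArgmin r c Z with hδ
  have hL : 0 < log 2 := log_pos one_lt_two
  have hδ_mul : δ * (r + c * log 2) = c * (log (r / c) - log (log 2)) + Z - c * log 2 := by
    rw [hδ, treeSizeUpperArgmin, div_mul_cancel₀ _ (by positivity), ← div_div,
      log_div (by positivity) hL.ne']
  have hbalance : r / c * exp ((Z - δ * r) / c) = log 2 * (2 : ℝ) ^ (δ + 1) := by
    rw [← exp_log (show 0 < r / c by positivity), ← exp_log hL, rpow_def_of_pos two_pos,
      ← exp_add, ← exp_add]
    congr 1
    rw [← eq_sub_iff_add_eq', div_eq_iff hc.ne']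
    linear_combination -hδ_mul
  refine (hasDerivAt_treeSizeUpper Z δ).congr_deriv ?_
  linear_combination -hbalance

end

theorem div_add_mul_log_two_lt {r c : ℝ} (hr : 0 < r) (hc : 0 < c) :
    c / (r + c * log 2) < 1.5 := by
  have hL : 2 / 3 < log 2 := by linarith [log_two_gt_d9]
  rw [div_lt_iff₀ (by positivity)]
  nlinarith

theorem ub_function_minimizer_and_gap_general (r c Z : ℝ)
    (hr : 0 < r) (hc : 0 < c)
    (g : ℝ → ℝ)
    (hg : ∀ δ : ℝ, g δ = Real.exp ((Z - δ * r) / c) + (2 : ℝ) ^ (δ + 1) - 2) :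
    StrictConvexOn ℝ Set.univ g ∧
    (∀ δ : ℝ,
      δ ≠ (c * Real.log (r / (c * Real.log 2)) + Z - c * Real.log 2)
            / (r + c * Real.log 2) →
      g ((c * Real.log (r / (c * Real.log 2)) + Z - c * Real.log 2)
            / (r + c * Real.log 2)) < g δ) ∧
    ((c * Real.log (r / (c * Real.log 2)) + Z - c * Real.log 2) / (r + c * Real.log 2)
      - (c * Real.log (r / (c * Real.log 2)) + Z - c * (1 + Real.log 2))
          / (r + c * Real.log 2)
      = c / (r + c * Real.log 2)) ∧
    c / (r + c * Real.log 2) = 1 / (r / c + Real.log 2) ∧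
    0 < c / (r + c * Real.log 2) ∧ c / (r + c * Real.log 2) < 1.5 := by
  obtain rfl : g = treeSizeUpper r c Z := funext hg
  have hconvex := strictConvexOn_treeSizeUpper Z hr.ne' hc.ne'
  have hD : 0 < r + c * log 2 := by positivity
  refine ⟨hconvex, fun δ hδ ↦ ?_, ?_, ?_, div_pos hc hD, div_add_mul_log_two_lt hr hc⟩
  · exact hconvex.lt_of_hasDerivAt_eq_zero (mem_univ _) (mem_univ δ)
      (hasDerivAt_treeSizeUpper_argmin Z hr hc) hδ
  · rw [div_sub_div_same]
    congr 1
    ring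
  · field_simp

/-- The upper-bounding function `g(δ) = e^((Z - δr)/c) + 2^(δ+1) - 2` is strictly
convex with unique minimizer `δ̄ = (c·ln(r/(c·ln 2)) + Z - c·ln 2)/(r + c·ln 2)`;
moreover the gap between `δ̄` and the minimizer
`δ̲ = (c·ln(r/(c·ln 2)) + Z - c(1 + ln 2))/(r + c·ln 2)` of the lower-bounding
function equals `ε = c/(r + c·ln 2) = 1/(r/c + ln 2) ∈ (0, 1.5)`. -/
theorem ub_function_minimizer_and_gap (r c Z : ℝ)
    (hr : 0 < r) (hc : 0 < c) (hZ : 0 < Z)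
    (g : ℝ → ℝ)
    (hg : ∀ δ : ℝ, g δ = Real.exp ((Z - δ * r) / c) + (2 : ℝ) ^ (δ + 1) - 2) :
    StrictConvexOn ℝ Set.univ g ∧
    (∀ δ : ℝ,
      δ ≠ (c * Real.log (r / (c * Real.log 2)) + Z - c * Real.log 2)
            / (r + c * Real.log 2) →
      g ((c * Real.log (r / (c * Real.log 2)) + Z - c * Real.log 2)
            / (r + c * Real.log 2)) < g δ) ∧
    ((c * Real.log (r / (c * Real.log 2)) + Z - c * Real.log 2) / (r + c * Real.log 2)
      - (c * Real.log (r / (c * Real.log 2)) + Z - c * (1 + Real.log 2))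
          / (r + c * Real.log 2)
      = c / (r + c * Real.log 2)) ∧
    c / (r + c * Real.log 2) = 1 / (r / c + Real.log 2) ∧
    0 < c / (r + c * Real.log 2) ∧ c / (r + c * Real.log 2) < 1.5 :=
  ub_function_minimizer_and_gap_general r c Z hr hc g hg
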